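/- arXiv:1009.1820 — 3 statements merged into one kernel-verified Lean document; each statement's English description precedes it below -/
import Mathlib

section
/- Let u : [0,T] × 𝕋 → ℝ be a smooth solution of m_t + u² m_x + 3 u u_x m = 0, where m = u - u_{xx}, and let ξ : [0,T] × 𝕋 → 𝕋 solve the flow equation ξ_t(t,x) = u²(t, ξ(t,x)), ξ(0,x) = x, with ∂_x ξ(t,x) > 0. Then for every t ∈ [0,T] and x ∈ 𝕋, m(t, ξ(t,x)) · (∂_x ξ(t,x))^{3/2} = m(0,x); that is, the quantity (m∘ξ)(∂_xξ)^{3/2} is conserved in time. -/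
open Real Set

private lemma hasDerivAt_snd' {F : ℝ × ℝ → ℝ} (hF : Differentiable ℝ F) (t y : ℝ) :
    HasDerivAt (fun z => F (t, z)) (fderiv ℝ F (t, y) (0, 1)) y :=
  (hF (t, y)).hasFDerivAt.comp_hasDerivAt y ((hasDerivAt_const y t).prodMk (hasDerivAt_id y))

private lemma hasDerivAt_fst' {F : ℝ × ℝ → ℝ} (hF : Differentiable ℝ F) (t y : ℝ) :
    HasDerivAt (fun τ => F (τ, y)) (fderiv ℝ F (t, y) (1, 0)) t :=
  (hF (t, y)).hasFDerivAt.comp_hasDerivAt t ((hasDerivAt_id t).prodMk (hasDerivAt_const t y))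

private lemma contDiff_pd {F : ℝ × ℝ → ℝ} (hF : ContDiff ℝ (⊤ : ℕ∞) F) (v : ℝ × ℝ) :
    ContDiff ℝ (⊤ : ℕ∞) (fun p => fderiv ℝ F p v) :=
  (hF.fderiv_right (by simp)).clm_apply contDiff_const

/-- **Conservation of the orbit invariant** (equation (2.24)): if `u` is a smooth
solution of `mₜ + u²mₓ + 3uuₓm = 0` with `m = u - uₓₓ`, and `ξ` is the flow of the
time-dependent vector field `u²` with `∂ₓξ > 0`, then
`(m ∘ ξ)(∂ₓξ)^{3/2}` is conserved: `m(t,ξ(t,x))(∂ₓξ(t,x))^{3/2} = m(0,x)`. -/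
theorem novikov_orbit_invariant (T : ℝ) (hT : 0 < T)
    (u ξ : ℝ → ℝ → ℝ)
    (hu : ContDiff ℝ (⊤ : ℕ∞) (Function.uncurry u))
    (huper : ∀ t : ℝ, Function.Periodic (u t) 1)
    (m : ℝ → ℝ → ℝ)
    (hm : ∀ t x : ℝ, m t x = u t x - deriv (deriv (u t)) x)
    (heq : ∀ t ∈ Icc (0:ℝ) T, ∀ x : ℝ,
      deriv (fun τ => m τ x) t + (u t x) ^ 2 * deriv (m t) x
        + 3 * u t x * deriv (u t) x * m t x = 0)
    (hξ : ContDiff ℝ (⊤ : ℕ∞) (Function.uncurry ξ))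
    (hξ0 : ∀ x : ℝ, ξ 0 x = x)
    (hξlift : ∀ t x : ℝ, ξ t (x + 1) = ξ t x + 1)
    (hflow : ∀ t ∈ Icc (0:ℝ) T, ∀ x : ℝ,
      HasDerivAt (fun τ => ξ τ x) ((u t (ξ t x)) ^ 2) t)
    (hpos : ∀ t ∈ Icc (0:ℝ) T, ∀ x : ℝ, 0 < deriv (ξ t) x) :
    ∀ t ∈ Icc (0:ℝ) T, ∀ x : ℝ,
      m t (ξ t x) * (deriv (ξ t) x) ^ ((3:ℝ)/2) = m 0 x := by
  -- uncurried versions and their partial derivatives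
  set U : ℝ × ℝ → ℝ := Function.uncurry u with hU
  set Xi : ℝ × ℝ → ℝ := Function.uncurry ξ with hXi
  have hUd : Differentiable ℝ U := hu.differentiable (by simp)
  have hXid : Differentiable ℝ Xi := hξ.differentiable (by simp)
  -- first x-derivative of u
  set Ux : ℝ × ℝ → ℝ := fun p => fderiv ℝ U p (0, 1) with hUx
  have hUxs : ContDiff ℝ (⊤ : ℕ∞) Ux := contDiff_pd hu _
  have hux : ∀ t y : ℝ, deriv (u t) y = Ux (t, y) := fun t y =>
    (hasDerivAt_snd' hUd t y).deriv
  -- second x-derivative of u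
  set Uxx : ℝ × ℝ → ℝ := fun p => fderiv ℝ Ux p (0, 1) with hUxx
  have hUxxs : ContDiff ℝ (⊤ : ℕ∞) Uxx := contDiff_pd hUxs _
  have huxx : ∀ t y : ℝ, deriv (deriv (u t)) y = Uxx (t, y) := by
    intro t y
    have h1 : deriv (u t) = fun z => Ux (t, z) := funext fun z => hux t z
    rw [h1]
    exact (hasDerivAt_snd' (hUxs.differentiable (by simp)) t y).deriv
  -- uncurried m is smooth
  set M : ℝ × ℝ → ℝ := fun p => U p - Uxx p with hM
  have hMs : ContDiff ℝ (⊤ : ℕ∞) M := hu.sub hUxxs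
  have hMd : Differentiable ℝ M := hMs.differentiable (by simp)
  have hmM : ∀ t y : ℝ, m t y = M (t, y) := by
    intro t y
    rw [hm t y, huxx t y]
    rfl
  -- partial derivatives of m
  have hmt : ∀ t y : ℝ, deriv (fun τ => m τ y) t = fderiv ℝ M (t, y) (1, 0) := by
    intro t y
    have h1 : (fun τ => m τ y) = fun τ => M (τ, y) := funext fun τ => hmM τ y
    rw [h1]
    exact (hasDerivAt_fst' hMd t y).deriv
  have hmx : ∀ t y : ℝ, deriv (m t) y = fderiv ℝ M (t, y) (0, 1) := by
    intro t y
    have h1 : m t = fun z => M (t, z) := funext fun z => hmM t z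
    rw [h1]
    exact (hasDerivAt_snd' hMd t y).deriv
  -- spatial derivative of the flow
  set D : ℝ × ℝ → ℝ := fun p => fderiv ℝ Xi p (0, 1) with hD
  have hDs : ContDiff ℝ (⊤ : ℕ∞) D := contDiff_pd hξ _
  have hDd : Differentiable ℝ D := hDs.differentiable (by simp)
  have hDx : ∀ t y : ℝ, deriv (ξ t) y = D (t, y) := fun t y =>
    (hasDerivAt_snd' hXid t y).deriv
  intro t ht x
  -- the conserved quantity
  set F : ℝ → ℝ := fun τ => m τ (ξ τ x) * (D (τ, x)) ^ ((3:ℝ)/2) with hF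
  have key : ∀ s ∈ Icc (0:ℝ) T, HasDerivAt F 0 s := by
    intro s hs
    set c : ℝ := u s (ξ s x) with hc
    set c' : ℝ := deriv (u s) (ξ s x) with hc'
    set g : ℝ := D (s, x) with hg
    set mm : ℝ := m s (ξ s x) with hmm
    have hgpos : 0 < g := by rw [hg, ← hDx]; exact hpos s hs x
    -- derivative of τ ↦ m τ (ξ τ x)
    have hm1 : HasDerivAt (fun τ => m τ (ξ τ x)) (-(3 * c * c' * mm)) s := by
      have hcomp : HasDerivAt (fun τ => M (τ, ξ τ x))
          (fderiv ℝ M (s, ξ s x) (1, c ^ 2)) s :=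
        (hMd (s, ξ s x)).hasFDerivAt.comp_hasDerivAt (f := fun τ => (τ, ξ τ x)) s
          ((hasDerivAt_id' s).prodMk (hflow s hs x))
      have hval : fderiv ℝ M (s, ξ s x) (1, c ^ 2) = -(3 * c * c' * mm) := by
        have hsplit : ((1 : ℝ), c ^ 2) = (1, 0) + c ^ 2 • ((0 : ℝ), (1 : ℝ)) := by
          simp
        rw [hsplit, map_add, map_smul]
        have := heq s hs (ξ s x)
        rw [hmt s (ξ s x), hmx s (ξ s x)] at this
        simp only [smul_eq_mul]
        linarith [this]
      have hfun : (fun τ => M (τ, ξ τ x)) = fun τ => m τ (ξ τ x) :=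
        funext fun τ => (hmM τ (ξ τ x)).symm
      rw [hfun, hval] at hcomp
      exact hcomp
    -- derivative of τ ↦ D (τ, x)
    have hD1 : HasDerivAt (fun τ => D (τ, x)) (2 * c * (c' * g)) s := by
      have hDer : HasDerivAt (fun τ => D (τ, x)) (fderiv ℝ D (s, x) (1, 0)) s :=
        hasDerivAt_fst' hDd s x
      -- symmetry of the second derivative of Xi
      set Φ : ℝ × ℝ → (ℝ × ℝ) →L[ℝ] ℝ := fderiv ℝ Xi with hΦ
      have hΦd : DifferentiableAt ℝ Φ (s, x) :=
        ((hξ.fderiv_right (m := (⊤ : ℕ∞)) (by simp)).differentiable (by simp)) (s, x)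
      have hsymm : ∀ v w : ℝ × ℝ,
          fderiv ℝ Φ (s, x) v w = fderiv ℝ Φ (s, x) w v := by
        intro v w
        exact second_derivative_symmetric (f := Xi) (f' := Φ)
          (fun y => (hXid y).hasFDerivAt) hΦd.hasFDerivAt v w
      -- fderiv of p ↦ Φ p v
      have happ : ∀ v w : ℝ × ℝ,
          fderiv ℝ (fun p => Φ p v) (s, x) w = fderiv ℝ Φ (s, x) w v := by
        intro v w
        have h1 : HasFDerivAt (fun p => Φ p v)
            ((ContinuousLinearMap.apply ℝ ℝ v).comp (fderiv ℝ Φ (s, x))) (s, x) :=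
          (ContinuousLinearMap.apply ℝ ℝ v).hasFDerivAt.comp (s, x) hΦd.hasFDerivAt
        rw [h1.fderiv]
        rfl
      have h2 : fderiv ℝ D (s, x) (1, 0)
          = fderiv ℝ (fun p => Φ p (1, 0)) (s, x) (0, 1) := by
        rw [happ, happ, hsymm]
      -- x ↦ Φ (s, x) (1,0) equals x ↦ (u s (ξ s x))^2 on all of ℝ
      have hDt : ∀ y : ℝ, Φ (s, y) (1, 0) = (u s (ξ s y)) ^ 2 := by
        intro y
        exact (hasDerivAt_fst' hXid s y).unique (hflow s hs y)
      have h3 : HasDerivAt (fun y => Φ (s, y) (1, 0))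
          (fderiv ℝ (fun p => Φ p (1, 0)) (s, x) (0, 1)) x := by
        have := hasDerivAt_snd' (F := fun p => Φ p (1, 0))
          (((hξ.fderiv_right (m := (⊤ : ℕ∞)) (by simp)).clm_apply contDiff_const).differentiable (by simp)) s x
        exact this
      have h4 : HasDerivAt (fun y => (u s (ξ s y)) ^ 2) (2 * c * (c' * g)) x := by
        have hxi : HasDerivAt (ξ s) g x := hasDerivAt_snd' hXid s x
        have hus : HasDerivAt (u s) c' (ξ s x) := by
          have : DifferentiableAt ℝ (u s) (ξ s x) := by
            have h1 : u s = fun z => U (s, z) := rfl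
            rw [h1]
            exact (hasDerivAt_snd' hUd s (ξ s x)).differentiableAt
          exact this.hasDerivAt
        have hcomp := (hus.comp x hxi).fun_pow 2
        convert hcomp using 1 <;> first | rfl | simp [Function.comp, hc]
      have h5 : (fun y => Φ (s, y) (1, 0)) = fun y => (u s (ξ s y)) ^ 2 :=
        funext hDt
      rw [h5] at h3
      have h6 : fderiv ℝ (fun p => Φ p (1, 0)) (s, x) (0, 1) = 2 * c * (c' * g) :=
        h3.unique h4
      rw [h2, h6] at hDer
      exact hDer
    -- derivative of τ ↦ (D (τ, x)) ^ (3/2)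
    have hr : HasDerivAt (fun τ => (D (τ, x)) ^ ((3:ℝ)/2))
        (2 * c * (c' * g) * ((3:ℝ)/2) * g ^ ((3:ℝ)/2 - 1)) s :=
      hD1.rpow_const (Or.inl hgpos.ne')
    have hmul := hm1.mul hr
    have hzero : -(3 * c * c' * mm) * g ^ ((3:ℝ)/2)
        + mm * (2 * c * (c' * g) * ((3:ℝ)/2) * g ^ ((3:ℝ)/2 - 1)) = 0 := by
      have hgg : g * g ^ ((3:ℝ)/2 - 1) = g ^ ((3:ℝ)/2) := by
        rw [show (3:ℝ)/2 - 1 = 1/2 by norm_num]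
        rw [show (3:ℝ)/2 = 1 + 1/2 by norm_num, Real.rpow_add hgpos,
          Real.rpow_one]
      linear_combination (3 * c * c' * mm) * hgg
    rw [hzero] at hmul
    exact hmul
  -- conclude by constancy
  have hcont : ContinuousOn F (Icc 0 T) := fun s hs =>
    (key s hs).continuousAt.continuousWithinAt
  have hconst := constant_of_has_deriv_right_zero hcont
    (fun s hs => (key s (Ico_subset_Icc_self hs)).hasDerivWithinAt) t ht
  have hF0 : F 0 = m 0 x := by
    have h1 : D (0, x) = 1 := by
      rw [← hDx]
      have : ξ 0 = fun y => y := funext hξ0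
      rw [this]
      exact deriv_id x
    rw [hF]
    simp only [h1, hξ0 x, Real.one_rpow, mul_one]
  rw [hF0] at hconst
  rw [hDx t x]
  exact hconst
end

section
/- Let u : [0,T] × 𝕋 → ℝ be a smooth solution of m_t + u² m_x + 3 u u_x m = 0 with m = u - u_{xx}, and suppose the flow ξ of u² (i.e. ξ_t = u²(t,ξ), ξ(0,x) = x) exists on [0,T] with ∂_xξ > 0 and x ↦ ξ(t,x) surjective onto 𝕋 for each t. If m(0,x) = u₀(x) - u₀''(x) ≥ 0 for all x ∈ 𝕋, then m(t,x) ≥ 0 for all t ∈ [0,T] and all x ∈ 𝕋 (and likewise with ≥ replaced by ≤). -/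
open Real Set

private lemma slice_x {F : ℝ×ℝ → ℝ} (hF : Differentiable ℝ F) (t x : ℝ) :
    HasDerivAt (fun y => F (t, y)) (fderiv ℝ F (t, x) (0, 1)) x :=
  (hF (t,x)).hasFDerivAt.comp_hasDerivAt x ((hasDerivAt_const x t).prodMk (hasDerivAt_id x))

private lemma slice_t {F : ℝ×ℝ → ℝ} (hF : Differentiable ℝ F) (t x : ℝ) :
    HasDerivAt (fun τ => F (τ, x)) (fderiv ℝ F (t, x) (1, 0)) t :=
  (hF (t,x)).hasFDerivAt.comp_hasDerivAt t ((hasDerivAt_id t).prodMk (hasDerivAt_const t x))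

/-- **Propagation of the sign condition** (used in the proof of Theorem 2.3): if `u`
is a smooth solution of `mₜ + u²mₓ + 3uuₓm = 0` with `m = u - uₓₓ`, and the flow `ξ`
of `u²` exists on `[0,T]` with `∂ₓξ > 0` and `x ↦ ξ(t,x)` surjective, then
`m(0,·) ≥ 0` implies `m(t,·) ≥ 0` for all `t ∈ [0,T]`, and likewise with `≤`. -/
theorem novikov_sign_propagation (T : ℝ) (hT : 0 < T)
    (u ξ : ℝ → ℝ → ℝ)
    (hu : ContDiff ℝ (⊤ : ℕ∞) (Function.uncurry u))
    (huper : ∀ t : ℝ, Function.Periodic (u t) 1)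
    (m : ℝ → ℝ → ℝ)
    (hm : ∀ t x : ℝ, m t x = u t x - deriv (deriv (u t)) x)
    (heq : ∀ t ∈ Icc (0:ℝ) T, ∀ x : ℝ,
      deriv (fun τ => m τ x) t + (u t x) ^ 2 * deriv (m t) x
        + 3 * u t x * deriv (u t) x * m t x = 0)
    (hξ : ContDiff ℝ (⊤ : ℕ∞) (Function.uncurry ξ))
    (hξ0 : ∀ x : ℝ, ξ 0 x = x)
    (hξlift : ∀ t x : ℝ, ξ t (x + 1) = ξ t x + 1)
    (hflow : ∀ t ∈ Icc (0:ℝ) T, ∀ x : ℝ,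
      HasDerivAt (fun τ => ξ τ x) ((u t (ξ t x)) ^ 2) t)
    (hpos : ∀ t ∈ Icc (0:ℝ) T, ∀ x : ℝ, 0 < deriv (ξ t) x)
    (hsurj : ∀ t ∈ Icc (0:ℝ) T, Function.Surjective (ξ t)) :
    ((∀ x : ℝ, 0 ≤ m 0 x) → ∀ t ∈ Icc (0:ℝ) T, ∀ x : ℝ, 0 ≤ m t x) ∧
    ((∀ x : ℝ, m 0 x ≤ 0) → ∀ t ∈ Icc (0:ℝ) T, ∀ x : ℝ, m t x ≤ 0) := by
  set U : ℝ×ℝ → ℝ := Function.uncurry u with hUdef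
  have hU : ContDiff ℝ (⊤ : ℕ∞) U := hu
  have hUd : Differentiable ℝ U := hU.differentiable (by simp)
  -- partial x derivative of u
  set ux : ℝ×ℝ → ℝ := fun p => fderiv ℝ U p (0, 1) with huxdef
  have hux : ContDiff ℝ (⊤ : ℕ∞) ux := (hU.fderiv_right (by simp)).clm_apply contDiff_const
  have huxd : Differentiable ℝ ux := hux.differentiable (by simp)
  have hux_eq : ∀ t x : ℝ, deriv (u t) x = ux (t, x) := by
    intro t x
    exact (slice_x hUd t x).deriv
  -- second partial x derivative
  set uxx : ℝ×ℝ → ℝ := fun p => fderiv ℝ ux p (0, 1) with huxxdef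
  have huxx : ContDiff ℝ (⊤ : ℕ∞) uxx := (hux.fderiv_right (by simp)).clm_apply contDiff_const
  have huxx_eq : ∀ t x : ℝ, deriv (deriv (u t)) x = uxx (t, x) := by
    intro t x
    have h1 : deriv (u t) = fun y => ux (t, y) := funext fun y => hux_eq t y
    rw [h1]
    exact (slice_x (hux.differentiable (by simp)) t x).deriv
  -- m as a smooth function of (t,x)
  set M : ℝ×ℝ → ℝ := fun p => U p - uxx p with hMdef
  have hM : ContDiff ℝ (⊤ : ℕ∞) M := hU.sub huxx
  have hMd : Differentiable ℝ M := hM.differentiable (by simp)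
  have hm_eq : ∀ t x : ℝ, m t x = M (t, x) := by
    intro t x
    rw [hm t x, huxx_eq t x]
    rfl
  -- the two partial derivatives of m
  have hmt : ∀ t x : ℝ, deriv (fun τ => m τ x) t = fderiv ℝ M (t, x) (1, 0) := by
    intro t x
    have : (fun τ => m τ x) = fun τ => M (τ, x) := funext fun τ => hm_eq τ x
    rw [this]
    exact (slice_t hMd t x).deriv
  have hmx : ∀ t x : ℝ, deriv (m t) x = fderiv ℝ M (t, x) (0, 1) := by
    intro t x
    have : m t = fun y => M (t, y) := funext fun y => hm_eq t y
    rw [this]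
    exact (slice_x hMd t x).deriv
  -- key claim: sign propagation along characteristics
  have key : ∀ t ∈ Icc (0:ℝ) T, ∀ x : ℝ, ∃ c : ℝ, 0 < c ∧ m t (ξ t x) = c * m 0 x := by
    intro t ht x
    -- the coefficient along the characteristic through x
    set a : ℝ → ℝ := fun s => 3 * u s (ξ s x) * ux (s, ξ s x) with hadef
    have hcurve : Continuous fun s : ℝ => ((s, ξ s x) : ℝ × ℝ) := by
      exact continuous_id.prodMk (hξ.continuous.comp (continuous_id.prodMk continuous_const))
    have ha : Continuous a := by
      have h1 : Continuous fun s => u s (ξ s x) := hU.continuous.comp hcurve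
      exact (continuous_const.mul h1).mul (hux.continuous.comp hcurve)
    set A : ℝ → ℝ := fun s => ∫ τ in (0:ℝ)..s, a τ with hAdef
    have hA : ∀ s : ℝ, HasDerivAt A (a s) s := fun s =>
      intervalIntegral.integral_hasDerivAt_right (ha.intervalIntegrable _ _)
        (ha.stronglyMeasurableAtFilter _ _) ha.continuousAt
    set y : ℝ → ℝ := fun s => M (s, ξ s x) with hydef
    -- ODE satisfied by y on [0,T]
    have hy : ∀ s ∈ Icc (0:ℝ) T, HasDerivAt y (-(a s) * y s) s := by
      intro s hs
      have hc : HasDerivAt (fun τ => ((τ, ξ τ x) : ℝ × ℝ))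
          (1, (u s (ξ s x)) ^ 2) s := (hasDerivAt_id s).prodMk (hflow s hs x)
      have h1 : HasDerivAt y (fderiv ℝ M (s, ξ s x) (1, (u s (ξ s x)) ^ 2)) s :=
        (hMd (s, ξ s x)).hasFDerivAt.comp_hasDerivAt (l := M) (f := fun τ => ((τ, ξ τ x) : ℝ × ℝ)) s hc
      have h2 : fderiv ℝ M (s, ξ s x) (1, (u s (ξ s x)) ^ 2)
          = fderiv ℝ M (s, ξ s x) (1, 0)
            + (u s (ξ s x)) ^ 2 * fderiv ℝ M (s, ξ s x) (0, 1) := by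
        have : ((1, (u s (ξ s x)) ^ 2) : ℝ × ℝ)
            = (1, 0) + (u s (ξ s x)) ^ 2 • ((0, 1) : ℝ × ℝ) := by
          simp [Prod.ext_iff]
        rw [this, map_add, map_smul]
        simp [smul_eq_mul]
      have h3 := heq s hs (ξ s x)
      rw [hmt s (ξ s x), hmx s (ξ s x), hux_eq s (ξ s x)] at h3
      have h4 : fderiv ℝ M (s, ξ s x) (1, (u s (ξ s x)) ^ 2) = -(a s) * y s := by
        rw [h2]
        have hys : y s = m s (ξ s x) := (hm_eq s (ξ s x)).symm
        rw [hys]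
        simp only [hadef]
        linarith
      rw [h4] at h1
      exact h1
    -- g = y * exp(A) is constant on [0,T]
    set g : ℝ → ℝ := fun s => y s * Real.exp (A s) with hgdef
    have hg : ∀ s ∈ Icc (0:ℝ) T, HasDerivAt g 0 s := by
      intro s hs
      have := ((hy s hs).fun_mul ((hA s).exp))
      convert this using 1 <;> first | rfl | ring
    have hgc : ∀ s ∈ Icc (0:ℝ) T, g s = g 0 := by
      refine constant_of_has_deriv_right_zero (fun s hs => ((hg s hs).continuousAt).continuousWithinAt) ?_
      intro s hs
      exact (hg s (Ico_subset_Icc_self hs)).hasDerivWithinAt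
    have hgt := hgc t ht
    have hA0 : A 0 = 0 := by simp [hAdef]
    have hy0 : y 0 = m 0 x := by rw [hydef]; simp only [hξ0 x]; exact (hm_eq 0 x).symm
    refine ⟨Real.exp (A 0) / Real.exp (A t), by positivity, ?_⟩
    have hyt : m t (ξ t x) = y t := hm_eq t (ξ t x)
    have : y t * Real.exp (A t) = y 0 * Real.exp (A 0) := hgt
    rw [hyt]
    field_simp
    rw [hy0] at this
    linarith [this]
  constructor
  · intro h0 t ht z
    obtain ⟨x, hx⟩ := hsurj t ht z
    obtain ⟨c, hc, hmc⟩ := key t ht x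
    rw [← hx, hmc]
    exact mul_nonneg hc.le (h0 x)
  · intro h0 t ht z
    obtain ⟨x, hx⟩ := hsurj t ht z
    obtain ⟨c, hc, hmc⟩ := key t ht x
    rw [← hx, hmc]
    exact mul_nonpos_of_nonneg_of_nonpos hc.le (h0 x)
end

section
/- Let u : [0,T] × 𝕋 → ℝ be a smooth solution of the Novikov equation u_t - u_{xxt} + 4u²u_x - 3u u_x u_{xx} - u²u_{xxx} = 0. Then the H¹ energy ∫_{𝕋} ( u(t,x)² + u_x(t,x)² ) dx is constant in t. -/
open Real Set
noncomputable def pd (v : ℝ × ℝ) (f : ℝ × ℝ → ℝ) : ℝ × ℝ → ℝ :=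
  fun p => fderiv ℝ f p v

lemma pd_contDiff {f : ℝ × ℝ → ℝ} (hf : ContDiff ℝ (⊤ : ℕ∞) f) (v : ℝ × ℝ) :
    ContDiff ℝ (⊤ : ℕ∞) (pd v f) :=
  (hf.fderiv_right (by simp)).clm_apply contDiff_const

lemma hasDerivAt_snd {f : ℝ × ℝ → ℝ} (hf : ContDiff ℝ (⊤ : ℕ∞) f) (t x : ℝ) :
    HasDerivAt (fun y => f (t, y)) (pd (0, 1) f (t, x)) x := by
  have h1 : HasDerivAt (fun y : ℝ => ((t, y) : ℝ × ℝ)) ((0 : ℝ), (1 : ℝ)) x :=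
    (hasDerivAt_const x t).prodMk (hasDerivAt_id x)
  have h2 := (hf.differentiable (by simp) (t, x)).hasFDerivAt
  exact h2.comp_hasDerivAt x h1

lemma hasDerivAt_fst {f : ℝ × ℝ → ℝ} (hf : ContDiff ℝ (⊤ : ℕ∞) f) (t x : ℝ) :
    HasDerivAt (fun τ => f (τ, x)) (pd (1, 0) f (t, x)) t := by
  have h1 : HasDerivAt (fun τ : ℝ => ((τ, x) : ℝ × ℝ)) ((1 : ℝ), (0 : ℝ)) t :=
    (hasDerivAt_id t).prodMk (hasDerivAt_const t x)
  have h2 := (hf.differentiable (by simp) (t, x)).hasFDerivAt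
  exact h2.comp_hasDerivAt t h1

lemma pd_comm {f : ℝ × ℝ → ℝ} (hf : ContDiff ℝ (⊤ : ℕ∞) f) (v w : ℝ × ℝ) :
    pd w (pd v f) = pd v (pd w f) := by
  funext p
  have hd : ∀ q, HasFDerivAt f (fderiv ℝ f q) q := fun q =>
    (hf.differentiable (by simp) q).hasFDerivAt
  have hf' : ContDiff ℝ (⊤ : ℕ∞) (fderiv ℝ f) := hf.fderiv_right (by simp)
  have hd2 : HasFDerivAt (fderiv ℝ f) (fderiv ℝ (fderiv ℝ f) p) p :=
    (hf'.differentiable (by simp) p).hasFDerivAt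
  have hsymm := second_derivative_symmetric hd hd2 v w
  have key : ∀ a : ℝ × ℝ, fderiv ℝ (fun q => fderiv ℝ f q a) p =
      (ContinuousLinearMap.apply ℝ ℝ a).comp (fderiv ℝ (fderiv ℝ f) p) := by
    intro a
    exact ((ContinuousLinearMap.apply ℝ ℝ a).hasFDerivAt.comp p hd2).fderiv
  show fderiv ℝ (fun q => fderiv ℝ f q v) p w = fderiv ℝ (fun q => fderiv ℝ f q w) p v
  rw [key v, key w]
  simpa using hsymm.symm

lemma pd_periodic {f : ℝ × ℝ → ℝ} (hf : ContDiff ℝ (⊤ : ℕ∞) f)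
    (hp : ∀ p : ℝ × ℝ, f (p + (0, 1)) = f p) (v : ℝ × ℝ) :
    ∀ p, pd v f (p + (0, 1)) = pd v f p := by
  intro p
  have h1 : HasFDerivAt f (fderiv ℝ f (p + (0, 1))) (p + (0, 1)) :=
    (hf.differentiable (by simp) _).hasFDerivAt
  have htr : HasFDerivAt (fun q : ℝ × ℝ => q + (0, 1))
      (ContinuousLinearMap.id ℝ (ℝ × ℝ)) p := (hasFDerivAt_id p).add_const (0, 1)
  have h2 : HasFDerivAt (fun q => f (q + (0, 1)))
      ((fderiv ℝ f (p + (0, 1))).comp (ContinuousLinearMap.id ℝ (ℝ × ℝ))) p :=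
    h1.comp p htr
  have h3 : (fun q : ℝ × ℝ => f (q + (0, 1))) = f := funext hp
  rw [h3, ContinuousLinearMap.comp_id] at h2
  show fderiv ℝ f (p + (0, 1)) v = fderiv ℝ f p v
  rw [← h2.fderiv]

/-- **Conservation of the `H¹` energy** for smooth solutions of the Novikov equation
`uₜ - uₓₓₜ + 4u²uₓ - 3uuₓuₓₓ - u²uₓₓₓ = 0` on `[0,T] × 𝕋`:
`∫_𝕋 (u² + uₓ²) dx` is constant in time. -/
theorem novikov_h1_energy_conservation (T : ℝ) (hT : 0 < T)
    (u : ℝ → ℝ → ℝ)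
    (hu : ContDiff ℝ (⊤ : ℕ∞) (Function.uncurry u))
    (hper : ∀ t : ℝ, Function.Periodic (u t) 1)
    (heq : ∀ t ∈ Icc (0:ℝ) T, ∀ x : ℝ,
      deriv (fun τ => u τ x) t - deriv (fun τ => deriv (deriv (u τ)) x) t
        + 4 * (u t x) ^ 2 * deriv (u t) x
        - 3 * u t x * deriv (u t) x * deriv (deriv (u t)) x
        - (u t x) ^ 2 * deriv (deriv (deriv (u t))) x = 0) :
    ∀ t ∈ Icc (0:ℝ) T,
      (∫ x in (0:ℝ)..1, ((u t x) ^ 2 + (deriv (u t) x) ^ 2))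
        = ∫ x in (0:ℝ)..1, ((u 0 x) ^ 2 + (deriv (u 0) x) ^ 2) := by
  set U : ℝ × ℝ → ℝ := Function.uncurry u with hUdef
  have hUs : ContDiff ℝ (⊤ : ℕ∞) U := hu
  set X : ℝ × ℝ → ℝ := pd (0,1) U with hXdef
  have hXs : ContDiff ℝ (⊤ : ℕ∞) X := pd_contDiff hUs _
  set XX : ℝ × ℝ → ℝ := pd (0,1) X with hXXdef
  have hXXs : ContDiff ℝ (⊤ : ℕ∞) XX := pd_contDiff hXs _
  set XXX : ℝ × ℝ → ℝ := pd (0,1) XX with hXXXdef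
  set Ut : ℝ × ℝ → ℝ := pd (1,0) U with hUtdef
  set XT : ℝ × ℝ → ℝ := pd (1,0) X with hXTdef
  have hXTs : ContDiff ℝ (⊤ : ℕ∞) XT := pd_contDiff hXs _
  set XXT : ℝ × ℝ → ℝ := pd (1,0) XX with hXXTdef
  -- identification of the one-dimensional derivatives
  have hux : ∀ t : ℝ, deriv (u t) = fun x => X (t, x) := by
    intro t; funext x; exact (hasDerivAt_snd hUs t x).deriv
  have huxx : ∀ t : ℝ, deriv (deriv (u t)) = fun x => XX (t, x) := by
    intro t; funext x; rw [hux]; exact (hasDerivAt_snd hXs t x).deriv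
  have huxxx : ∀ t : ℝ, deriv (deriv (deriv (u t))) = fun x => XXX (t, x) := by
    intro t; funext x; rw [huxx]; exact (hasDerivAt_snd hXXs t x).deriv
  have hut : ∀ t x : ℝ, deriv (fun τ => u τ x) t = Ut (t, x) := by
    intro t x; exact (hasDerivAt_fst hUs t x).deriv
  have huxxt : ∀ t x : ℝ, deriv (fun τ => deriv (deriv (u τ)) x) t = XXT (t, x) := by
    intro t x
    have : (fun τ => deriv (deriv (u τ)) x) = fun τ => XX (τ, x) := by
      funext τ; rw [huxx]
    rw [this]; exact (hasDerivAt_fst hXXs t x).deriv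
  -- the equation in the new notation
  have heq' : ∀ t ∈ Icc (0:ℝ) T, ∀ x : ℝ,
      Ut (t, x) = XXT (t, x) - 4 * U (t, x) ^ 2 * X (t, x)
        + 3 * U (t, x) * X (t, x) * XX (t, x) + U (t, x) ^ 2 * XXX (t, x) := by
    intro t ht x
    have := heq t ht x
    rw [hut, huxxt, huxxx t, huxx t, hux t] at this
    simp only at this
    show Ut (t, x) = XXT (t, x) - 4 * u t x ^ 2 * X (t, x)
        + 3 * u t x * X (t, x) * XX (t, x) + u t x ^ 2 * XXX (t, x)
    linarith
  -- periodicity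
  have hperU : ∀ p : ℝ × ℝ, U (p + (0,1)) = U p := by
    rintro ⟨t, x⟩
    show u (t + 0) (x + 1) = u t x
    rw [add_zero]; exact hper t x
  have hperX : ∀ p : ℝ × ℝ, X (p + (0,1)) = X p := pd_periodic hUs hperU _
  have hperXX : ∀ p : ℝ × ℝ, XX (p + (0,1)) = XX p := pd_periodic hXs hperX _
  have hperXT : ∀ p : ℝ × ℝ, XT (p + (0,1)) = XT p := pd_periodic hXs hperX _
  -- the time derivative integrand
  set h : ℝ × ℝ → ℝ := fun p => 2 * U p * Ut p + 2 * X p * XT p with hhdef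
  have hhc : Continuous h := by
    apply Continuous.add
    · exact ((continuous_const.mul hUs.continuous).mul
        ((pd_contDiff hUs (1,0)).continuous))
    · exact ((continuous_const.mul hXs.continuous).mul
        ((pd_contDiff hXs (1,0)).continuous))
  -- key : the spatial integral of h vanishes on [0,T]
  have hzero : ∀ s ∈ Icc (0:ℝ) T, (∫ x in (0:ℝ)..1, h (s, x)) = 0 := by
    intro s hs
    -- F (s, y) = 2 U XT - 2 U^4 + 2 U^3 XX
    have hderiv : ∀ x ∈ uIcc (0:ℝ) 1,
        HasDerivAt (fun y => 2 * U (s, y) * XT (s, y) - 2 * U (s, y) ^ 4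
            + 2 * U (s, y) ^ 3 * XX (s, y)) (h (s, x)) x := by
      intro x _
      have hU' : HasDerivAt (fun y => U (s, y)) (X (s, x)) x := hasDerivAt_snd hUs s x
      have hXT' : HasDerivAt (fun y => XT (s, y)) (pd (0,1) XT (s, x)) x :=
        hasDerivAt_snd hXTs s x
      have hXX' : HasDerivAt (fun y => XX (s, y)) (XXX (s, x)) x := hasDerivAt_snd hXXs s x
      have h1 := (hU'.const_mul (2:ℝ)).mul hXT'
      have h2 := (hU'.pow 4).const_mul (2:ℝ)
      have h3 := ((hU'.pow 3).const_mul (2:ℝ)).mul hXX'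
      have htot := (h1.sub h2).add h3
      convert htot using 1 <;> try rfl
      have hcomm : pd (0,1) XT (s, x) = XXT (s, x) := by
        rw [hXTdef, hXXTdef, hXXdef, pd_comm hXs]
      rw [hcomm, hhdef]
      simp only
      rw [heq' s hs x]
      simp only [Pi.pow_apply]
      ring
    have hint : IntervalIntegrable (fun x => h (s, x)) MeasureTheory.volume 0 1 :=
      (hhc.comp (continuous_const.prodMk continuous_id)).intervalIntegrable 0 1
    rw [intervalIntegral.integral_eq_sub_of_hasDerivAt hderiv hint]
    have e1 : U (s, 1) = U (s, 0) := by
      have := hperU (s, 0); simpa using this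
    have e2 : XT (s, 1) = XT (s, 0) := by
      have := hperXT (s, 0); simpa using this
    have e3 : XX (s, 1) = XX (s, 0) := by
      have := hperXX (s, 0); simpa using this
    rw [e1, e2, e3]; ring
  -- FTC in time, for each fixed x
  have hftc : ∀ t : ℝ, ∀ x : ℝ,
      U (t, x) ^ 2 + X (t, x) ^ 2 - (U (0, x) ^ 2 + X (0, x) ^ 2)
        = ∫ s in (0:ℝ)..t, h (s, x) := by
    intro t x
    have hderiv : ∀ s ∈ uIcc (0:ℝ) t,
        HasDerivAt (fun τ => U (τ, x) ^ 2 + X (τ, x) ^ 2) (h (s, x)) s := by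
      intro s _
      have h1 := ((hasDerivAt_fst hUs s x).pow 2).add ((hasDerivAt_fst hXs s x).pow 2)
      convert h1 using 1 <;> try rfl
      rw [hhdef]; simp only; ring
    have hint : IntervalIntegrable (fun s => h (s, x)) MeasureTheory.volume 0 t :=
      (hhc.comp (continuous_id.prodMk continuous_const)).intervalIntegrable 0 t
    rw [intervalIntegral.integral_eq_sub_of_hasDerivAt hderiv hint]
  -- now put everything together
  intro t ht
  have hteq : ∀ τ x : ℝ, (u τ x) ^ 2 + (deriv (u τ) x) ^ 2 = U (τ, x) ^ 2 + X (τ, x) ^ 2 := by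
    intro τ x; rw [hux]; rfl
  have hgc : ∀ τ : ℝ, Continuous (fun x => U (τ, x) ^ 2 + X (τ, x) ^ 2) := by
    intro τ
    exact ((hUs.continuous.comp (continuous_const.prodMk continuous_id)).pow 2).add
      ((hXs.continuous.comp (continuous_const.prodMk continuous_id)).pow 2)
  have hsub : (∫ x in (0:ℝ)..1, ((u t x) ^ 2 + (deriv (u t) x) ^ 2))
      - (∫ x in (0:ℝ)..1, ((u 0 x) ^ 2 + (deriv (u 0) x) ^ 2))
      = ∫ x in (0:ℝ)..1, (U (t, x) ^ 2 + X (t, x) ^ 2 - (U (0, x) ^ 2 + X (0, x) ^ 2)) := by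
    have hEt : ∀ τ : ℝ, (∫ x in (0:ℝ)..1, ((u τ x) ^ 2 + (deriv (u τ) x) ^ 2))
        = ∫ x in (0:ℝ)..1, (U (τ, x) ^ 2 + X (τ, x) ^ 2) := fun τ =>
      intervalIntegral.integral_congr (fun x _ => hteq τ x)
    rw [hEt t, hEt 0, ← intervalIntegral.integral_sub
        ((hgc t).intervalIntegrable (μ := MeasureTheory.volume) 0 1)
        ((hgc 0).intervalIntegrable (μ := MeasureTheory.volume) 0 1)]
  have hswap : (∫ x in (0:ℝ)..1, (∫ s in (0:ℝ)..t, h (s, x))) = 0 := by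
    have ht0 : (0:ℝ) ≤ t := ht.1
    rw [intervalIntegral.integral_of_le (zero_le_one)]
    have : ∀ x : ℝ, (∫ s in (0:ℝ)..t, h (s, x)) = ∫ s in Ioc (0:ℝ) t, h (s, x) := by
      intro x; rw [intervalIntegral.integral_of_le ht0]
    simp_rw [this]
    have hIntProd : MeasureTheory.Integrable (Function.uncurry (fun x s => h (s, x)))
        ((MeasureTheory.volume.restrict (Ioc (0:ℝ) 1)).prod
          (MeasureTheory.volume.restrict (Ioc (0:ℝ) t))) := by
      rw [MeasureTheory.Measure.prod_restrict]
      have hc : Continuous (Function.uncurry (fun x s => h (s, x))) :=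
        hhc.comp (continuous_snd.prodMk continuous_fst)
      have := hc.continuousOn.integrableOn_compact (μ := MeasureTheory.volume) (isCompact_Icc.prod isCompact_Icc :
        IsCompact (Icc (0:ℝ) 1 ×ˢ Icc (0:ℝ) t))
      rw [← MeasureTheory.Measure.volume_eq_prod]
      exact this.mono_set (prod_mono Ioc_subset_Icc_self Ioc_subset_Icc_self)
    rw [MeasureTheory.integral_integral_swap hIntProd]
    apply MeasureTheory.integral_eq_zero_of_ae
    refine (MeasureTheory.ae_restrict_iff' measurableSet_Ioc).mpr ?_
    filter_upwards with s hs
    have hsT : s ∈ Icc (0:ℝ) T := ⟨hs.1.le, hs.2.trans ht.2⟩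
    have := hzero s hsT
    rw [intervalIntegral.integral_of_le (zero_le_one)] at this
    exact this
  have : (∫ x in (0:ℝ)..1, ((u t x) ^ 2 + (deriv (u t) x) ^ 2))
      - (∫ x in (0:ℝ)..1, ((u 0 x) ^ 2 + (deriv (u 0) x) ^ 2)) = 0 := by
    rw [hsub]
    rw [intervalIntegral.integral_congr (g := fun x => ∫ s in (0:ℝ)..t, h (s, x))
      (fun x _ => hftc t x)]
    exact hswap
  linarith
end
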